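/- arXiv:1804.06232 — 4 statements merged into one kernel-verified Lean document; each statement's English description precedes it below -/
import Mathlib

section
/- Let V be a finite-dimensional vector space over ℝ or ℂ, ω a nondegenerate alternating bilinear form on V, and A : V → V a linear map satisfying ω(Av, w) + ω(v, Aw) = ω(v, w) for all v, w ∈ V (a conformal vector field of ω in the linear sense). Let A = S + N be the Jordan–Chevalley decomposition of A, with S semisimple, N nilpotent, and SN = NS. Then S is again conformal, i.e. ω(Sv, w) + ω(v, Sw) = ω(v, w) for all v, w, and N is infinitesimally symplectic (Hamiltonian), i.e. ω(Nv, w) + ω(v, Nw) = 0 for all v, w. -/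
open Module Polynomial

section Aux

variable {𝕜 : Type*} [RCLike 𝕜] {V : Type*} [AddCommGroup V] [Module 𝕜 V]
  [FiniteDimensional 𝕜 V]

/-- Elements of `adjoin 𝕜 {A}` commute with anything commuting with `A`. -/
lemma commute_of_mem_adjoin_singleton' {A C X : Module.End 𝕜 V}
    (hC : Commute C A) (hX : X ∈ Algebra.adjoin 𝕜 {A}) : Commute C X := by
  induction hX using Algebra.adjoin_induction with
  | mem x hx => rcases hx with rfl; exact hC
  | algebraMap r => exact Algebra.commute_algebraMap_right r C
  | add x y _ _ hx hy => exact hx.add_right hy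
  | mul x y _ _ hx hy => exact hx.mul_right hy

/-- Uniqueness in the Jordan–Chevalley decomposition (given enough commutation). -/
lemma jc_unique {S N S' N' : Module.End 𝕜 V}
    (hS : S.IsSemisimple) (hN : IsNilpotent N)
    (hS' : S'.IsSemisimple) (hN' : IsNilpotent N')
    (hcS : Commute S S') (hcN : Commute N' N)
    (hsum : S + N = S' + N') : S = S' := by
  have h : S - S' = N' - N := by
    rw [sub_eq_sub_iff_add_eq_add, hsum, add_comm]
  have hnil : IsNilpotent (S - S') := by
    rw [h]; exact hcN.isNilpotent_sub hN' hN
  have hss : (S - S').IsSemisimple := hS.sub_of_commute hcS hS'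
  exact sub_eq_zero.mp (Module.End.eq_zero_of_isNilpotent_isSemisimple hnil hss)

end Aux

/-- The semisimple part (in the Jordan–Chevalley decomposition) of a linear
conformal (Liouville) endomorphism of a symplectic vector space is again conformal, and the
remaining (nilpotent) part is infinitesimally symplectic (Hamiltonian). -/
theorem semisimple_part_of_conformal_is_conformal
    (𝕜 : Type*) [RCLike 𝕜] (V : Type*) [AddCommGroup V] [Module 𝕜 V]
    [FiniteDimensional 𝕜 V]
    (ω : V →ₗ[𝕜] V →ₗ[𝕜] 𝕜)
    (halt : ∀ v : V, ω v v = 0)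
    (hnondeg : ∀ v : V, (∀ w : V, ω v w = 0) → v = 0)
    (A S N : V →ₗ[𝕜] V)
    (hconf : ∀ v w : V, ω (A v) w + ω v (A w) = ω v w)
    (hJC : A = S + N)
    (hS : Module.End.IsSemisimple S)
    (hN : IsNilpotent N)
    (hSN : Commute S N) :
    (∀ v w : V, ω (S v) w + ω v (S w) = ω v w) ∧
    (∀ v w : V, ω (N v) w + ω v (N w) = 0) := by
  classical
  -- skew-symmetry
  have hskew : ∀ v w : V, ω w v = -ω v w := by
    intro v w
    have h := halt (v + w)
    simp only [map_add, LinearMap.add_apply, halt] at h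
    linear_combination h
  -- the musical isomorphism
  have hinj : Function.Injective ω := by
    rw [← LinearMap.ker_eq_bot, LinearMap.ker_eq_bot']
    intro v hv
    exact hnondeg v fun w => by rw [hv]; rfl
  have hsurj : Function.Surjective ω :=
    (LinearMap.injective_iff_surjective_of_finrank_eq_finrank
      (Subspace.dual_finrank_eq (K := 𝕜) (V := V)).symm).mp hinj
  let e : V ≃ₗ[𝕜] Module.Dual 𝕜 V := LinearEquiv.ofBijective ω ⟨hinj, hsurj⟩
  have he : ∀ x : V, e x = ω x := fun _ => rfl
  -- the ω-adjoint
  let dg : Module.End 𝕜 V → Module.End 𝕜 V :=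
    fun X => e.symm.toLinearMap ∘ₗ X.dualMap ∘ₗ e.toLinearMap
  have hdg : ∀ (X : Module.End 𝕜 V) (w v : V), ω (dg X w) v = ω w (X v) := by
    intro X w v
    show ω (e.symm (X.dualMap (e w))) v = ω w (X v)
    rw [← he, e.apply_symm_apply]
    rfl
  have hdg' : ∀ (X : Module.End 𝕜 V) (v w : V), ω v (dg X w) = ω (X v) w := by
    intro X v w
    rw [hskew (dg X w) v, hdg, hskew (X v) w, neg_neg]
  -- extensionality via nondegeneracy
  have hext : ∀ (Y Z : Module.End 𝕜 V), (∀ w v, ω (Y w) v = ω (Z w) v) → Y = Z := by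
    intro Y Z h
    ext w
    have h0 : ∀ v, ω (Y w - Z w) v = 0 := by
      intro v; simp only [map_sub, LinearMap.sub_apply, h w v, sub_self]
    exact sub_eq_zero.mp (hnondeg _ h0)
  -- algebraic properties of dg
  have dg_add : ∀ X Y, dg (X + Y) = dg X + dg Y := by
    intro X Y
    refine hext _ _ fun w v => ?_
    rw [hdg]
    simp only [LinearMap.add_apply, map_add]
    rw [hdg, hdg]
  have dg_smul : ∀ (c : 𝕜) X, dg (c • X) = c • dg X := by
    intro c X
    refine hext _ _ fun w v => ?_
    rw [hdg]
    simp only [LinearMap.smul_apply, map_smul, smul_eq_mul]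
    rw [hdg]
  have dg_zero : dg 0 = 0 := by
    refine hext _ _ fun w v => ?_
    rw [hdg]; simp
  have dg_one : dg 1 = 1 := by
    refine hext _ _ fun w v => ?_
    rw [hdg]; rfl
  have dg_mul : ∀ X Y, dg (X * Y) = dg Y * dg X := by
    intro X Y
    refine hext _ _ fun w v => ?_
    rw [hdg]
    show ω w (X (Y v)) = ω (dg Y (dg X w)) v
    rw [hdg, hdg]
  have dg_pow : ∀ (X : Module.End 𝕜 V) (n : ℕ), dg (X ^ n) = dg X ^ n := by
    intro X n
    induction n with
    | zero => simpa using dg_one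
    | succ n ih => rw [pow_succ, dg_mul, ih, pow_succ']
  -- dg maps adjoin into adjoin
  have dg_adjoin : ∀ (B X : Module.End 𝕜 V), X ∈ Algebra.adjoin 𝕜 {B} →
      dg X ∈ Algebra.adjoin 𝕜 {dg B} := by
    intro B X hX
    induction hX using Algebra.adjoin_induction with
    | mem x hx => rcases hx with rfl; exact Algebra.self_mem_adjoin_singleton 𝕜 _
    | algebraMap r =>
        have h1 : (algebraMap 𝕜 (Module.End 𝕜 V)) r = r • 1 := by
          rw [Algebra.algebraMap_eq_smul_one]
        rw [h1, dg_smul, dg_one, ← h1]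
        exact Subalgebra.algebraMap_mem _ r
    | add x y _ _ hx hy => rw [dg_add]; exact add_mem hx hy
    | mul x y _ _ hx hy => rw [dg_mul]; exact mul_mem hy hx
  -- dg commutes with aeval
  have dg_aeval : ∀ (X : Module.End 𝕜 V) (p : 𝕜[X]),
      dg ((aeval X) p) = (aeval (dg X)) p := by
    intro X p
    induction p using Polynomial.induction_on' with
    | add p q hp hq => rw [map_add, dg_add, hp, hq, map_add]
    | monomial n c =>
        rw [aeval_monomial, aeval_monomial, ← Algebra.smul_def, ← Algebra.smul_def,
          dg_smul, dg_pow]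
  -- dg A = 1 - A
  have hdgA : dg A = 1 - A := by
    refine hext _ _ fun w v => ?_
    rw [hdg]
    simp only [LinearMap.sub_apply, Module.End.one_apply, map_sub, LinearMap.sub_apply]
    linear_combination hconf w v
  -- canonical Jordan–Chevalley decomposition
  obtain ⟨N₀, hN₀mem, S₀, hS₀mem, hN₀nil, hS₀ss, hA⟩ :=
    Module.End.exists_isNilpotent_isSemisimple (f := A)
  have hSA : Commute S A := by rw [hJC]; exact (Commute.refl S).add_right hSN
  have hNA : Commute N A := by rw [hJC]; exact hSN.symm.add_right (Commute.refl N)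
  -- step 1 : S = S₀ and N = N₀
  have hSS₀ : S = S₀ :=
    jc_unique hS hN hS₀ss hN₀nil
      (commute_of_mem_adjoin_singleton' hSA hS₀mem)
      (commute_of_mem_adjoin_singleton' hNA hN₀mem).symm
      (by rw [← hJC, hA, add_comm])
  have hNN₀ : N = N₀ := by
    have h := hJC.symm.trans hA
    rw [hSS₀, add_comm N₀ S₀] at h
    exact add_left_cancel h
  -- dg S₀ and dg N₀ lie in adjoin 𝕜 {A}
  have hsub : Algebra.adjoin 𝕜 {(1 : Module.End 𝕜 V) - A} ≤ Algebra.adjoin 𝕜 {A} := by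
    apply Algebra.adjoin_le
    intro x hx
    rcases hx with rfl
    exact sub_mem (one_mem _) (Algebra.self_mem_adjoin_singleton 𝕜 A)
  have hdgS₀mem : dg S₀ ∈ Algebra.adjoin 𝕜 {A} :=
    hsub (hdgA ▸ dg_adjoin A S₀ hS₀mem)
  have hdgN₀mem : dg N₀ ∈ Algebra.adjoin 𝕜 {A} :=
    hsub (hdgA ▸ dg_adjoin A N₀ hN₀mem)
  -- dg S₀ is semisimple, dg N₀ is nilpotent
  have hdgS₀ss : (dg S₀).IsSemisimple := by
    apply Module.End.isSemisimple_of_squarefree_aeval_eq_zero hS₀ss.minpoly_squarefree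
    rw [← dg_aeval, minpoly.aeval, dg_zero]
  have hdgN₀nil : IsNilpotent (dg N₀) := by
    obtain ⟨k, hk⟩ := hN₀nil
    exact ⟨k, by rw [← dg_pow, hk, dg_zero]⟩
  -- second decomposition of A
  have hA2 : A = (1 - dg S₀) + (-(dg N₀)) := by
    have hx : dg A = dg N₀ + dg S₀ := by rw [hA, dg_add]
    have e1 : (1 : Module.End 𝕜 V) - A = dg N₀ + dg S₀ := hdgA ▸ hx
    have e2 : A = 1 - (dg N₀ + dg S₀) := by rw [← e1, sub_sub_cancel]
    rw [e2]; abel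
  have hS₀A : Commute S₀ A :=
    (commute_of_mem_adjoin_singleton' (Commute.refl A) hS₀mem).symm
  have hN₀A : Commute N₀ A :=
    (commute_of_mem_adjoin_singleton' (Commute.refl A) hN₀mem).symm
  have hc1 : Commute S₀ (1 - dg S₀) :=
    (Commute.one_right S₀).sub_right
      (commute_of_mem_adjoin_singleton' hS₀A hdgS₀mem)
  have hc2 : Commute (-(dg N₀)) N₀ :=
    ((commute_of_mem_adjoin_singleton' hN₀A hdgN₀mem).symm).neg_left
  have hss2 : ((1 : Module.End 𝕜 V) - dg S₀).IsSemisimple := by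
    have h1 : (1 : Module.End 𝕜 V).IsSemisimple := Module.End.isSemisimple_id
    exact h1.sub_of_commute (Commute.one_left (dg S₀)) hdgS₀ss
  have hsum2 : S₀ + N₀ = (1 - dg S₀) + (-(dg N₀)) := by
    rw [add_comm S₀ N₀, ← hA]; exact hA2
  have hS₀eq : S₀ = 1 - dg S₀ :=
    jc_unique hS₀ss hN₀nil hss2 hdgN₀nil.neg hc1 hc2 hsum2
  have hdgS₀ : dg S₀ = 1 - S₀ := by
    apply eq_sub_of_add_eq
    nth_rewrite 2 [hS₀eq]
    abel
  have hdgN₀ : dg N₀ = -N₀ := by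
    have h := hsum2
    rw [← hS₀eq] at h
    have h2 := add_left_cancel h
    nth_rewrite 2 [h2]
    rw [neg_neg]
  constructor
  · intro v w
    rw [hSS₀, ← hdg' S₀ v w, hdgS₀]
    simp only [LinearMap.sub_apply, Module.End.one_apply, map_sub]
    ring
  · intro v w
    rw [hNN₀]
    have h := hdg' N₀ v w
    rw [hdgN₀] at h
    simp only [LinearMap.neg_apply, map_neg] at h
    linear_combination -h
end

section
/- Let V be a finite-dimensional vector space over ℂ, ω a nondegenerate alternating bilinear form on V, and A : V → V a linear map satisfying ω(Av, w) + ω(v, Aw) = ω(v, w) for all v, w ∈ V. Let λ, μ ∈ ℂ with λ + μ ≠ 1. Then ω(v, w) = 0 for every v in the generalized eigenspace of A for λ and every w in the generalized eigenspace of A for μ. In particular, for λ ≠ 1/2 the generalized eigenspace of A for λ is isotropic with respect to ω. -/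
/-- For a linear conformal (Liouville) endomorphism `A` of a complex symplectic
vector space, generalized eigenspaces for eigenvalues `lam`, `mu` with `lam + mu ≠ 1` are
`ω`-orthogonal; in particular for `lam ≠ 1/2` the generalized eigenspace of `lam` is isotropic. -/
theorem genEigenspaces_orthogonal_of_conformal
    (V : Type*) [AddCommGroup V] [Module ℂ V] [FiniteDimensional ℂ V]
    (ω : V →ₗ[ℂ] V →ₗ[ℂ] ℂ)
    (halt : ∀ v : V, ω v v = 0)
    (hnondeg : ∀ v : V, (∀ w : V, ω v w = 0) → v = 0)
    (A : V →ₗ[ℂ] V)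
    (hconf : ∀ v w : V, ω (A v) w + ω v (A w) = ω v w) :
    (∀ lam mu : ℂ, lam + mu ≠ 1 →
      ∀ v ∈ Module.End.maxGenEigenspace A lam,
        ∀ w ∈ Module.End.maxGenEigenspace A mu, ω v w = 0) ∧
    (∀ lam : ℂ, lam ≠ 1/2 →
      ∀ v ∈ Module.End.maxGenEigenspace A lam,
        ∀ w ∈ Module.End.maxGenEigenspace A lam, ω v w = 0) := by
  have main : ∀ lam mu : ℂ, lam + mu ≠ 1 →
      ∀ v ∈ Module.End.maxGenEigenspace A lam,
        ∀ w ∈ Module.End.maxGenEigenspace A mu, ω v w = 0 := by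
    intro lam mu hne v hv w hw
    rw [Module.End.mem_maxGenEigenspace] at hv hw
    obtain ⟨k, hk⟩ := hv
    obtain ⟨l, hl⟩ := hw
    have key : ∀ n k l : ℕ, k + l ≤ n → ∀ v w : V,
        ((A - lam • (1 : Module.End ℂ V)) ^ k) v = 0 →
        ((A - mu • (1 : Module.End ℂ V)) ^ l) w = 0 → ω v w = 0 := by
      intro n
      induction n with
      | zero =>
        intro k l hkl v w hk hl
        have hk0 : k = 0 := by omega
        subst hk0
        simp only [pow_zero, Module.End.one_apply] at hk
        subst hk; simp
      | succ n ih =>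
        intro k l hkl v w hkv hlw
        match k, l with
        | 0, l =>
          simp only [pow_zero, Module.End.one_apply] at hkv
          subst hkv; simp
        | k, 0 =>
          simp only [pow_zero, Module.End.one_apply] at hlw
          subst hlw; simp
        | k+1, l+1 =>
          set B := A - lam • (1 : Module.End ℂ V)
          set C := A - mu • (1 : Module.End ℂ V)
          have h1 : (B ^ k) (B v) = 0 := by
            rw [← Module.End.mul_apply, ← pow_succ]; exact hkv
          have h2 : (C ^ l) (C w) = 0 := by
            rw [← Module.End.mul_apply, ← pow_succ]; exact hlw
          have hBv : ω (B v) w = 0 := ih k (l+1) (by omega) _ _ h1 hlw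
          have hCw : ω v (C w) = 0 := ih (k+1) l (by omega) _ _ hkv h2
          have hexp : ω (B v) w + ω v (C w) = (1 - lam - mu) * ω v w := by
            simp only [B, C, LinearMap.sub_apply, LinearMap.smul_apply,
              Module.End.one_apply, map_sub, map_smul, LinearMap.sub_apply,
              LinearMap.smul_apply, smul_eq_mul]
            have := hconf v w
            ring_nf
            ring_nf at this
            linear_combination this
          rw [hBv, hCw, add_zero] at hexp
          have h1lm : (1 : ℂ) - lam - mu ≠ 0 := by
            intro h; apply hne; linear_combination -h
          have := hexp.symm
          exact (mul_eq_zero.mp this).resolve_left h1lm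
    exact key (k + l) k l le_rfl v w hk hl
  refine ⟨main, fun lam hlam v hv w hw => main lam lam ?_ v hv w hw⟩
  intro h
  apply hlam
  have : lam = 1 / 2 := by linear_combination h / 2
  exact this
end

section
/- Let ω be a smooth closed 2-form on a neighborhood of 0 in ℝ^{2n}, let ω_c denote the constant 2-form equal to ω(0), let A be a real (2n)×(2n) matrix with linear vector field S(x) = Ax, and assume L_S ω = ω and L_S ω_c = ω_c. Define the 1-form ζ = i_S(ω − ω_c), i.e. ζ_x = (ω − ω_c)_x(Ax, ·), and for t ∈ [0,1] set ω_t = tω + (1−t)ω_c; assume each ω_t is nondegenerate on the neighborhood, and let Y_t be the unique time-dependent vector field with (ω_t)_x(Y_t(x), ·) = −ζ_x. Then Y_t commutes with S for every t: DY_t(x)(Ax) = A·Y_t(x) for all x near 0. -/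
/-!
Both forms in the Moser equation `ω_t(Y_t, ·) = -ζ` are eigenvectors of `L_S` with eigenvalue `1`:
`ω_t` by linearity, and `ζ = i_S (ω - ω_c)` because `L_S i_S = i_S L_S` (the field `S` commutes
with itself). Differentiating the Moser equation along `S` and using both identities gives
`ω_t([S, Y_t], ·) = 0`, so `[S, Y_t] = 0` by nondegeneracy. Differentiability of `Y_t` comes from
`Y_t = ω_t⁻¹(-ζ)`, inversion being smooth on the open set of isomorphisms.
-/

open scoped Topology

noncomputable section LieDerivative

variable {𝕜 E : Type*} [NontriviallyNormedField 𝕜] [NormedAddCommGroup E] [NormedSpace 𝕜 E]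

def lieDerivOneForm (S : E →L[𝕜] E) (ζ : E → E →L[𝕜] 𝕜) (x u : E) : 𝕜 :=
  fderiv 𝕜 ζ x (S x) u + ζ x (S u)

def lieDerivTwoForm (S : E →L[𝕜] E) (ω : E → E →L[𝕜] E →L[𝕜] 𝕜) (x u v : E) : 𝕜 :=
  fderiv 𝕜 ω x (S x) u v + ω x (S u) v + ω x u (S v)

variable {S : E →L[𝕜] E} {ω : E → E →L[𝕜] E →L[𝕜] 𝕜} {x : E}

theorem lieDerivOneForm_contract (hω : DifferentiableAt 𝕜 ω x) (u : E) :
    lieDerivOneForm S (fun y ↦ ω y (S y)) x u = lieDerivTwoForm S ω x (S x) u := by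
  simp only [lieDerivOneForm, lieDerivTwoForm, fderiv_clm_apply hω S.differentiableAt, S.fderiv,
    add_apply, ContinuousLinearMap.comp_apply, ContinuousLinearMap.flip_apply]
  ring

theorem lieDerivTwoForm_smul_add_const (hω : DifferentiableAt 𝕜 ω x) (a : 𝕜)
    (c : E →L[𝕜] E →L[𝕜] 𝕜) (u v : E) :
    lieDerivTwoForm S (fun y ↦ a • ω y + c) x u v
      = a * lieDerivTwoForm S ω x u v + (c (S u) v + c u (S v)) := by
  have hderiv : fderiv 𝕜 (fun y ↦ a • ω y + c) x = a • fderiv 𝕜 ω x :=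
    ((hω.hasFDerivAt.const_smul (𝕜 := 𝕜) (E := E) a).add_const c).fderiv
  simp only [lieDerivTwoForm, hderiv, add_apply, smul_apply, smul_eq_mul]
  ring

end LieDerivative

section Invertibility

variable {𝕜 E F G : Type*} [NontriviallyNormedField 𝕜] [NormedAddCommGroup E]
  [NormedAddCommGroup F] [NormedSpace 𝕜 F] [NormedAddCommGroup G] [NormedSpace 𝕜 G]

theorem ContinuousLinearMap.injective_of_forall_exists_apply_ne_zero [NormedSpace 𝕜 E]
    {B : E →L[𝕜] F →L[𝕜] 𝕜} (hB : ∀ u, u ≠ 0 → ∃ v, B u v ≠ 0) : Function.Injective B := by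
  refine (injective_iff_map_eq_zero B).2 fun u hu ↦ ?_
  by_contra hu0
  obtain ⟨v, hv⟩ := hB u hu0
  exact hv (by simp [hu])

theorem ContinuousLinearMap.isInvertible_of_injective_toDual [NormedSpace 𝕜 E] [CompleteSpace 𝕜]
    [FiniteDimensional 𝕜 E] {B : E →L[𝕜] E →L[𝕜] 𝕜} (hB : Function.Injective B) :
    B.IsInvertible := by
  have hdim : Module.finrank 𝕜 E = Module.finrank 𝕜 (E →L[𝕜] 𝕜) :=
    Subspace.dual_finrank_eq.symm.trans LinearMap.toContinuousLinearMap.finrank_eq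
  exact ⟨(LinearMap.linearEquivOfInjective B.toLinearMap hB hdim).toContinuousLinearEquiv, rfl⟩

theorem ContinuousLinearMap.IsInvertible.eventually_isInvertible [CompleteSpace F]
    {B : E → F →L[𝕜] G} {x : E} (hBx : (B x).IsInvertible) (hB : ContinuousAt B x) :
    ∀ᶠ y in 𝓝 x, (B y).IsInvertible := by
  obtain ⟨e, he⟩ := hBx
  exact hB.preimage_mem_nhds (he ▸ ContinuousLinearEquiv.nhds e)

theorem differentiableAt_of_eventually_apply_eq [NormedSpace 𝕜 E] [CompleteSpace F]
    {B : E → F →L[𝕜] G} {g : E → G} {Y : E → F} {x : E} (hBx : (B x).IsInvertible)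
    (hB : DifferentiableAt 𝕜 B x) (hg : DifferentiableAt 𝕜 g x) (hY : ∀ᶠ y in 𝓝 x, B y (Y y) = g y) :
    DifferentiableAt 𝕜 Y x := by
  have hY_eq : Y =ᶠ[𝓝 x] fun y ↦ (B y).inverse (g y) := by
    filter_upwards [hY, hBx.eventually_isInvertible hB.continuousAt] with y hy hBy
    exact (hBy.inverse_apply_eq.2 hy.symm).symm
  have hinv : DifferentiableAt 𝕜 ContinuousLinearMap.inverse (B x) :=
    (hBx.contDiffAt_map_inverse (n := 1)).differentiableAt one_ne_zero
  exact hY_eq.differentiableAt_iff.2 ((hinv.comp x hB).clm_apply hg)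

end Invertibility

section Moser

variable {𝕜 E : Type*} [NontriviallyNormedField 𝕜] [NormedAddCommGroup E] [NormedSpace 𝕜 E]

theorem fderiv_apply_eq_of_lieDeriv_eq_smul {S : E →L[𝕜] E} {B : E → E →L[𝕜] E →L[𝕜] 𝕜}
    {ζ : E → E →L[𝕜] 𝕜} {Y : E → E} {x : E} (c : 𝕜)
    (hB : DifferentiableAt 𝕜 B x) (hY : DifferentiableAt 𝕜 Y x) (hBx : Function.Injective (B x))
    (hLB : ∀ u v, lieDerivTwoForm S B x u v = c * B x u v)
    (hLζ : ∀ u, lieDerivOneForm S ζ x u = c * ζ x u)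
    (hBY : (fun y ↦ B y (Y y)) =ᶠ[𝓝 x] ζ) :
    fderiv 𝕜 Y x (S x) = S (Y x) := by
  have hderiv : fderiv 𝕜 (fun y ↦ B y (Y y)) x = fderiv 𝕜 ζ x := hBY.fderiv_eq
  rw [fderiv_clm_apply hB hY] at hderiv
  simp only [lieDerivTwoForm, lieDerivOneForm] at hLB hLζ
  apply hBx
  ext u
  have hdiff := DFunLike.congr_fun (DFunLike.congr_fun hderiv (S x)) u
  simp only [add_apply, ContinuousLinearMap.comp_apply, ContinuousLinearMap.flip_apply] at hdiff
  have hBYx := DFunLike.congr_fun hBY.eq_of_nhds u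
  have hBYx' := DFunLike.congr_fun hBY.eq_of_nhds (S u)
  linear_combination hdiff - hLB (Y x) u + hLζ u + hBYx' - c * hBYx

end Moser

theorem moser_field_commutes_with_linear_conformal_general
    (n : ℕ)
    (U : Set (Fin (n+n) → ℝ)) (hU : IsOpen U)
    (ω : (Fin (n+n) → ℝ) → (Fin (n+n) → ℝ) →L[ℝ] (Fin (n+n) → ℝ) →L[ℝ] ℝ)
    (hωsmooth : ContDiffOn ℝ (⊤ : ℕ∞) ω U)
    (A : Matrix (Fin (n+n)) (Fin (n+n)) ℝ)
    -- L_S ω = ω :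
    (hLS : ∀ x ∈ U, ∀ u v,
      fderiv ℝ ω x (A.mulVec x) u v + ω x (A.mulVec u) v + ω x u (A.mulVec v) = ω x u v)
    -- L_S ω_c = ω_c for the constant form ω_c = ω(0) :
    (hLSc : ∀ u v, ω 0 (A.mulVec u) v + ω 0 u (A.mulVec v) = ω 0 u v)
    -- each ω_t = tω + (1−t)ω_c is nondegenerate on U :
    (hndg : ∀ t ∈ Set.Icc (0:ℝ) 1, ∀ x ∈ U, ∀ u : Fin (n+n) → ℝ, u ≠ 0 →
      ∃ v, t * ω x u v + (1 - t) * ω 0 u v ≠ 0)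
    -- Y t is the Moser vector field : ω_t(Y_t(x), ·) = −ζ_x with ζ = i_S(ω − ω_c)
    (Y : ℝ → (Fin (n+n) → ℝ) → (Fin (n+n) → ℝ))
    (hY : ∀ t ∈ Set.Icc (0:ℝ) 1, ∀ x ∈ U, ∀ u,
      t * ω x (Y t x) u + (1 - t) * ω 0 (Y t x) u
        = -(ω x (A.mulVec x) u - ω 0 (A.mulVec x) u)) :
    ∀ t ∈ Set.Icc (0:ℝ) 1, ∀ x ∈ U,
      fderiv ℝ (Y t) x (A.mulVec x) = A.mulVec (Y t x) := by
  intro t ht x hx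
  let S := LinearMap.toContinuousLinearMap A.mulVecLin
  let ωt := fun y ↦ t • ω y + (1 - t) • ω 0
  -- `α = ω_c - ω`, so that `α y (S y) = -ζ_y`
  let α := fun y ↦ (-1 : ℝ) • ω y + ω 0
  have hLω : ∀ u v, lieDerivTwoForm S ω x u v = ω x u v := hLS x hx
  have hLω₀ : ∀ u v, ω 0 (S u) v + ω 0 u (S v) = ω 0 u v := hLSc
  have hω : DifferentiableAt ℝ ω x :=
    (hωsmooth.differentiableOn (by simp)).differentiableAt (hU.mem_nhds hx)
  have hωt : DifferentiableAt ℝ ωt x :=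
    (hω.fun_const_smul (𝕜 := ℝ) (E := Fin (n+n) → ℝ) t).add_const ((1 - t) • ω 0)
  have hα : DifferentiableAt ℝ α x :=
    (hω.fun_const_smul (𝕜 := ℝ) (E := Fin (n+n) → ℝ) (-1 : ℝ)).add_const (ω 0)
  have hLωt (u v) : lieDerivTwoForm S ωt x u v = 1 * ωt x u v := by
    rw [lieDerivTwoForm_smul_add_const hω, hLω]
    simp only [ωt, add_apply, smul_apply, smul_eq_mul]
    linear_combination (1 - t) * hLω₀ u v
  have hLζ (u) : lieDerivOneForm S (fun y ↦ α y (S y)) x u = 1 * α x (S x) u := by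
    rw [lieDerivOneForm_contract hα, lieDerivTwoForm_smul_add_const hω, hLω]
    simp only [α, add_apply, smul_apply, smul_eq_mul]
    linear_combination hLω₀ (S x) u
  have hωt_inj : Function.Injective (ωt x) :=
    ContinuousLinearMap.injective_of_forall_exists_apply_ne_zero fun u hu ↦ by
      simpa [ωt] using hndg t ht x hx u hu
  have hmoser : (fun y ↦ ωt y (Y t y)) =ᶠ[𝓝 x] fun y ↦ α y (S y) := by
    filter_upwards [hU.mem_nhds hx] with y hy
    ext u
    simp only [ωt, α, S, add_apply, smul_apply, smul_eq_mul,
      LinearMap.coe_toContinuousLinearMap', Matrix.mulVecLin_apply]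
    linear_combination hY t ht y hy u
  have hYx : DifferentiableAt ℝ (Y t) x :=
    differentiableAt_of_eventually_apply_eq
      (ContinuousLinearMap.isInvertible_of_injective_toDual hωt_inj) hωt
      (hα.clm_apply S.differentiableAt) hmoser
  exact fderiv_apply_eq_of_lieDeriv_eq_smul 1 hωt hYx hωt_inj hLωt hLζ hmoser

/-- (Key computation in the proof of the equivariant Darboux lemma.) Let `ω`
be a smooth closed 2-form near `0` in `ℝ^{2n}`, `ω_c` the constant form `ω(0)`, `A` a real
matrix with linear vector field `S(x) = Ax` satisfying `L_S ω = ω` and `L_S ω_c = ω_c`. Define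
`ζ = i_S (ω − ω_c)` and let `Y t` be the Moser path vector field: the unique solution of
`(ω_t)ₓ(Y_t(x), ·) = −ζₓ`, where `ω_t = tω + (1−t)ω_c` is nondegenerate for `t ∈ [0,1]`. Then
`Y_t` commutes with `S`: `DY_t(x)(Ax) = A·Y_t(x)`. -/
theorem moser_field_commutes_with_linear_conformal
    (n : ℕ)
    (U : Set (Fin (n+n) → ℝ)) (hU : IsOpen U) (h0U : (0 : Fin (n+n) → ℝ) ∈ U)
    (ω : (Fin (n+n) → ℝ) → (Fin (n+n) → ℝ) →L[ℝ] (Fin (n+n) → ℝ) →L[ℝ] ℝ)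
    (hωsmooth : ContDiffOn ℝ (⊤ : ℕ∞) ω U)
    (hωalt : ∀ x ∈ U, ∀ u, ω x u u = 0)
    -- ω is closed :
    (hclosed : ∀ x ∈ U, ∀ u v w : Fin (n+n) → ℝ,
      fderiv ℝ ω x u v w - fderiv ℝ ω x v u w + fderiv ℝ ω x w u v = 0)
    (A : Matrix (Fin (n+n)) (Fin (n+n)) ℝ)
    -- L_S ω = ω :
    (hLS : ∀ x ∈ U, ∀ u v,
      fderiv ℝ ω x (A.mulVec x) u v + ω x (A.mulVec u) v + ω x u (A.mulVec v) = ω x u v)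
    -- L_S ω_c = ω_c for the constant form ω_c = ω(0) :
    (hLSc : ∀ u v, ω 0 (A.mulVec u) v + ω 0 u (A.mulVec v) = ω 0 u v)
    -- each ω_t = tω + (1−t)ω_c is nondegenerate on U :
    (hndg : ∀ t ∈ Set.Icc (0:ℝ) 1, ∀ x ∈ U, ∀ u : Fin (n+n) → ℝ, u ≠ 0 →
      ∃ v, t * ω x u v + (1 - t) * ω 0 u v ≠ 0)
    -- Y t is the Moser vector field : ω_t(Y_t(x), ·) = −ζ_x with ζ = i_S(ω − ω_c)
    (Y : ℝ → (Fin (n+n) → ℝ) → (Fin (n+n) → ℝ))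
    (hY : ∀ t ∈ Set.Icc (0:ℝ) 1, ∀ x ∈ U, ∀ u,
      t * ω x (Y t x) u + (1 - t) * ω 0 (Y t x) u
        = -(ω x (A.mulVec x) u - ω 0 (A.mulVec x) u)) :
    ∀ t ∈ Set.Icc (0:ℝ) 1, ∀ x ∈ U,
      fderiv ℝ (Y t) x (A.mulVec x) = A.mulVec (Y t x) :=
  moser_field_commutes_with_linear_conformal_general n U hU ω hωsmooth A hLS hLSc hndg Y hY
end

section
/- Let X be the smooth vector field on ℝ² given by X(x,y) = ((2 + 3xy²)x, −(1 + 2xy²)y). Then there exists a smooth function F : ℝ² → ℝ such that: (a) all iterated derivatives of F vanish at the origin (F is flat at (0,0)); (b) F is not identically zero on any neighborhood of (0,0); and (c) X(F) = 0 near the origin, i.e. (2 + 3xy²)x·∂F/∂x − (1 + 2xy²)y·∂F/∂y = 0 on a neighborhood of (0,0). -/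
/-!
With `u = x y²` and `m = x² y³` one has `X(u) = -u²` and `X(m) = m`, while `g = expNegInvGlue`
satisfies `u² g'(u) = g(u)`. Hence `F = m · g(u)` is a first integral:
`X(F) = m g(u) - m u² g'(u) = 0`. It vanishes on the half-plane `x < 0`, whose closure contains
the origin, so all its derivatives vanish there, and it is positive on the open first quadrant.
-/

open scoped Topology
open Set Filter

theorem hasDerivAt_expNegInvGlue (x : ℝ) :
    HasDerivAt expNegInvGlue (x⁻¹ ^ 2 * expNegInvGlue x) x := by
  simpa using expNegInvGlue.hasDerivAt_polynomial_eval_inv_mul 1 x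

theorem sq_mul_inv_sq_mul_expNegInvGlue (x : ℝ) :
    x ^ 2 * (x⁻¹ ^ 2 * expNegInvGlue x) = expNegInvGlue x := by
  rcases eq_or_ne x 0 with rfl | hx
  · simp [expNegInvGlue.zero]
  · field_simp

theorem fderiv_mul_expNegInvGlue_comp_eq_zero {E : Type*} [NormedAddCommGroup E]
    [NormedSpace ℝ E] {m u : E → ℝ} {p v : E} (hm : DifferentiableAt ℝ m p)
    (hu : DifferentiableAt ℝ u p) (hmv : fderiv ℝ m p v = m p)
    (huv : fderiv ℝ u p v = -u p ^ 2) :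
    fderiv ℝ (fun q ↦ m q * expNegInvGlue (u q)) p v = 0 := by
  have hF : HasFDerivAt (fun q ↦ m q * expNegInvGlue (u q)) _ p :=
    hm.hasFDerivAt.fun_mul ((hasDerivAt_expNegInvGlue (u p)).comp_hasFDerivAt p hu.hasFDerivAt)
  rw [hF.fderiv]
  simp only [add_apply, smul_apply, smul_eq_mul, hmv, huv]
  linear_combination -m p * sq_mul_inv_sq_mul_expNegInvGlue (u p)

theorem iteratedFDeriv_eq_zero_of_mem_closure {𝕜 E F : Type*} [NontriviallyNormedField 𝕜]
    [NormedAddCommGroup E] [NormedSpace 𝕜 E] [NormedAddCommGroup F] [NormedSpace 𝕜 F]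
    {f : E → F} {n : WithTop ℕ∞} {k : ℕ} {s : Set E} {x : E} (hf : ContDiff 𝕜 n f) (hk : k ≤ n)
    (hs : IsOpen s) (hfs : EqOn f 0 s) (hx : x ∈ closure s) :
    iteratedFDeriv 𝕜 k f x = 0 := by
  have hzero : EqOn (iteratedFDeriv 𝕜 k f) 0 s := fun y hy ↦ by
    have hfy : f =ᶠ[𝓝 y] 0 := eventually_of_mem (hs.mem_nhds hy) hfs
    simpa using (hfy.iteratedFDeriv 𝕜 k).eq_of_nhds
  exact hzero.closure (hf.continuous_iteratedFDeriv hk) continuous_const hx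

def exampleField (p : ℝ × ℝ) : ℝ × ℝ :=
  ((2 + 3 * p.1 * p.2 ^ 2) * p.1, -(1 + 2 * p.1 * p.2 ^ 2) * p.2)

theorem fderiv_fst_mul_snd_sq_apply_exampleField (p : ℝ × ℝ) :
    fderiv ℝ (fun q : ℝ × ℝ ↦ q.1 * q.2 ^ 2) p (exampleField p) = -(p.1 * p.2 ^ 2) ^ 2 := by
  have h : HasFDerivAt (fun q : ℝ × ℝ ↦ q.1 * q.2 ^ 2) _ p :=
    (hasFDerivAt_fst (𝕜 := ℝ)).mul ((hasFDerivAt_snd (𝕜 := ℝ)).pow 2)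
  simp [h.fderiv, exampleField]
  ring

theorem fderiv_fst_sq_mul_snd_cube_apply_exampleField (p : ℝ × ℝ) :
    fderiv ℝ (fun q : ℝ × ℝ ↦ q.1 ^ 2 * q.2 ^ 3) p (exampleField p) = p.1 ^ 2 * p.2 ^ 3 := by
  have h : HasFDerivAt (fun q : ℝ × ℝ ↦ q.1 ^ 2 * q.2 ^ 3) _ p :=
    ((hasFDerivAt_fst (𝕜 := ℝ)).pow 2).mul ((hasFDerivAt_snd (𝕜 := ℝ)).pow 3)
  simp [h.fderiv, exampleField]
  ring

noncomputable def flatFirstIntegral (p : ℝ × ℝ) : ℝ :=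
  p.1 ^ 2 * p.2 ^ 3 * expNegInvGlue (p.1 * p.2 ^ 2)

theorem contDiff_flatFirstIntegral : ContDiff ℝ (⊤ : ℕ∞) flatFirstIntegral :=
  (by fun_prop : ContDiff ℝ (⊤ : ℕ∞) fun p : ℝ × ℝ ↦ p.1 ^ 2 * p.2 ^ 3).mul
    (expNegInvGlue.contDiff.comp
      (by fun_prop : ContDiff ℝ (⊤ : ℕ∞) fun p : ℝ × ℝ ↦ p.1 * p.2 ^ 2))

theorem fderiv_flatFirstIntegral_apply_exampleField (p : ℝ × ℝ) :
    fderiv ℝ flatFirstIntegral p (exampleField p) = 0 :=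
  fderiv_mul_expNegInvGlue_comp_eq_zero (by fun_prop) (by fun_prop)
    (fderiv_fst_sq_mul_snd_cube_apply_exampleField p) (fderiv_fst_mul_snd_sq_apply_exampleField p)

theorem flatFirstIntegral_eqOn_zero : EqOn flatFirstIntegral 0 (Iio 0 ×ˢ univ) := by
  rintro p ⟨hx : p.1 < 0, -⟩
  have hu : p.1 * p.2 ^ 2 ≤ 0 := mul_nonpos_of_nonpos_of_nonneg hx.le (sq_nonneg _)
  simp [flatFirstIntegral, expNegInvGlue.zero_of_nonpos hu]

theorem flatFirstIntegral_pos {p : ℝ × ℝ} (hp : p ∈ Ioi 0 ×ˢ Ioi 0) : 0 < flatFirstIntegral p := by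
  obtain ⟨hx : 0 < p.1, hy : 0 < p.2⟩ := hp
  exact mul_pos (by positivity) (expNegInvGlue.pos_of_pos (by positivity))

theorem zero_mem_closure_Iio_prod_univ : ((0 : ℝ), (0 : ℝ)) ∈ closure (Iio 0 ×ˢ univ) := by
  simp [closure_prod_eq, closure_Iio]

theorem zero_mem_closure_Ioi_prod_Ioi : ((0 : ℝ), (0 : ℝ)) ∈ closure (Ioi 0 ×ˢ Ioi 0) := by
  simp [closure_prod_eq, closure_Ioi]

/-- (Flat first integral of the Example in Section 2.4.) The smooth
hyperbolic vector field `X(x,y) = ((2+3xy²)x, −(1+2xy²)y)` on `ℝ²` admits a smooth first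
integral `F` which is flat at the origin (all iterated derivatives vanish at `(0,0)`) but not
identically zero on any neighborhood of the origin. -/
theorem flat_first_integral_exists :
    ∃ F : ℝ × ℝ → ℝ,
      ContDiff ℝ (⊤ : ℕ∞) F ∧
      -- (a) F is flat at the origin :
      (∀ k : ℕ, iteratedFDeriv ℝ k F ((0:ℝ), (0:ℝ)) = 0) ∧
      -- (b) F is not identically zero near the origin :
      (∀ U ∈ nhds ((0:ℝ), (0:ℝ)), ∃ p ∈ U, F p ≠ 0) ∧
      -- (c) X(F) = 0 near the origin :
      (∃ U ∈ nhds ((0:ℝ), (0:ℝ)), ∀ p ∈ U,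
        fderiv ℝ F p ((2 + 3 * p.1 * p.2 ^ 2) * p.1, -(1 + 2 * p.1 * p.2 ^ 2) * p.2) = 0) := by
  refine ⟨flatFirstIntegral, contDiff_flatFirstIntegral, fun k ↦ ?_, fun U hU ↦ ?_,
    univ, univ_mem, fun p _ ↦ fderiv_flatFirstIntegral_apply_exampleField p⟩
  · exact iteratedFDeriv_eq_zero_of_mem_closure contDiff_flatFirstIntegral
      (mod_cast le_top) (isOpen_Iio.prod isOpen_univ) flatFirstIntegral_eqOn_zero
      zero_mem_closure_Iio_prod_univ
  · obtain ⟨p, hpU, hp⟩ := mem_closure_iff_nhds.1 zero_mem_closure_Ioi_prod_Ioi U hU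
    exact ⟨p, hpU, (flatFirstIntegral_pos hp).ne'⟩
end
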